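/- Every vertex splittable monomial ideal has linear quotients. -/

import Mathlib

open MvPolynomial

namespace Paper

abbrev R (K : Type) [Field K] (n : ℕ) := MvPolynomial (Fin n) K

noncomputable def mon (K : Type) [Field K] {n : ℕ} (a : Fin n →₀ ℕ) : R K n :=
  monomial a 1

def mdeg {n : ℕ} (a : Fin n →₀ ℕ) : ℕ := a.sum fun _ e => e

def IsSqfree {n : ℕ} (a : Fin n →₀ ℕ) : Prop := ∀ i, a i ≤ 1

variable {K : Type} [Field K] {n : ℕ}

/-- A monomial ideal: an ideal generated by a set of monomials. -/
def IsMonomialIdeal (I : Ideal (R K n)) : Prop :=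
  ∃ S : Set (Fin n →₀ ℕ), I = Ideal.span ((mon K) '' S)

/-- The (exponent vectors of the) minimal monomial generators `G(I)` of a monomial
ideal: monomials in `I` such that no proper divisor lies in `I`. -/
def minGens (I : Ideal (R K n)) : Set (Fin n →₀ ℕ) :=
  { a | mon K a ∈ I ∧ ∀ (b : Fin n →₀ ℕ) (i : Fin n),
      a = b + Finsupp.single i 1 → mon K b ∉ I }

/-- Polymatroidal: a monomial ideal generated in a single degree satisfying the
exchange property. -/
def IsPolymatroidal (I : Ideal (R K n)) : Prop :=
  IsMonomialIdeal I ∧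
  (∃ d, ∀ a ∈ minGens I, mdeg a = d) ∧
  ∀ u ∈ minGens I, ∀ v ∈ minGens I, ∀ i : Fin n, v i < u i →
    ∃ j : Fin n, u j < v j ∧
      ∃ w ∈ minGens I, w + Finsupp.single i 1 = u + Finsupp.single j 1

/-- Matroidal: squarefree polymatroidal. -/
def IsMatroidal (I : Ideal (R K n)) : Prop :=
  IsPolymatroidal I ∧ ∀ a ∈ minGens I, IsSqfree a

/-- Weakly polymatroidal with respect to the variable ordering
`x_{σ 0} > x_{σ 1} > ... > x_{σ (n-1)}`. -/
def IsWeaklyPolymatroidalWrt (σ : Equiv.Perm (Fin n)) (I : Ideal (R K n)) : Prop :=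
  IsMonomialIdeal I ∧
  ∀ u ∈ minGens I, ∀ v ∈ minGens I, ∀ t : Fin n,
    (∀ s, s < t → u (σ s) = v (σ s)) → v (σ t) < u (σ t) →
    ∃ j : Fin n, t < j ∧
      ∃ w : Fin n →₀ ℕ,
        w + Finsupp.single (σ j) 1 = v + Finsupp.single (σ t) 1 ∧ mon K w ∈ I

/-- Weakly polymatroidal with respect to the standard ordering `x_1 > ... > x_n`. -/
def IsWeaklyPolymatroidal (I : Ideal (R K n)) : Prop :=
  IsWeaklyPolymatroidalWrt (Equiv.refl (Fin n)) I

/-- Vertex splittable monomial ideals (Moradi–Khosh-Ahang). Ideals of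
`K[V \ {x}]` are encoded as ideals of `R` whose minimal generators do not
involve the variable `x`. -/
inductive VertexSplittable : Ideal (R K n) → Prop
  | principal (a : Fin n →₀ ℕ) : VertexSplittable (Ideal.span {mon K a})
  | bot : VertexSplittable ⊥
  | top : VertexSplittable ⊤
  | split (x : Fin n) (I₁ I₂ : Ideal (R K n)) :
      VertexSplittable I₁ → VertexSplittable I₂ →
      (∀ a ∈ minGens I₁, a x = 0) → (∀ a ∈ minGens I₂, a x = 0) →
      I₂ ≤ I₁ →
      minGens (Ideal.span {(X x : R K n)} * I₁ + I₂)
        = minGens (Ideal.span {(X x : R K n)} * I₁) ∪ minGens I₂ →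
      minGens (Ideal.span {(X x : R K n)} * I₁) ∩ minGens I₂ = ∅ →
      VertexSplittable (Ideal.span {(X x : R K n)} * I₁ + I₂)

/-- Linear quotients: some ordering of the minimal monomial generators such that
each successive colon ideal is generated by a subset of the variables. -/
def HasLinearQuotients (I : Ideal (R K n)) : Prop :=
  IsMonomialIdeal I ∧
  ∃ L : List (Fin n →₀ ℕ), L.Nodup ∧ {a | a ∈ L} = minGens I ∧
    ∀ (j : ℕ) (hj : j < L.length), 0 < j →
      ∃ S : Set (Fin n),
        Submodule.colon (Ideal.span ((mon K) '' {a | a ∈ L.take j}))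
            (Ideal.span {mon K (L.get ⟨j, hj⟩)})
          = Ideal.span ((fun i => (X i : R K n)) '' S)


/-- A (possibly void) abstract simplicial complex on the vertex set `Fin n`. -/
structure SComplex (n : ℕ) where
  faces : Finset (Finset (Fin n))
  down : ∀ F ∈ faces, ∀ G ⊆ F, G ∈ faces

variable {n : ℕ}

def SComplex.IsFacet (Δ : SComplex n) (F : Finset (Fin n)) : Prop :=
  F ∈ Δ.faces ∧ ∀ G ∈ Δ.faces, F ⊆ G → G = F

/-- Deletion of a vertex. -/
def SComplex.del (Δ : SComplex n) (x : Fin n) : SComplex n where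
  faces := Δ.faces.filter (fun F => x ∉ F)
  down := by
    intro F hF G hG
    simp only [Finset.mem_filter] at *
    exact ⟨Δ.down F hF.1 G hG, fun hx => hF.2 (hG hx)⟩

/-- Link of a vertex. -/
def SComplex.lk (Δ : SComplex n) (x : Fin n) : SComplex n where
  faces := Δ.faces.filter (fun F => x ∉ F ∧ insert x F ∈ Δ.faces)
  down := by
    intro F hF G hG
    simp only [Finset.mem_filter] at *
    refine ⟨Δ.down F hF.1 G hG, fun hx => hF.2.1 (hG hx), ?_⟩
    exact Δ.down _ hF.2.2 _ (Finset.insert_subset_insert x hG)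

/-- Vertex decomposability, defined recursively via shedding vertices. -/
inductive VertexDecomposable : SComplex n → Prop
  | simplex (Δ : SComplex n) (F : Finset (Fin n)) :
      Δ.faces = F.powerset → VertexDecomposable Δ
  | shed (Δ : SComplex n) (x : Fin n) :
      VertexDecomposable (Δ.del x) → VertexDecomposable (Δ.lk x) →
      (∀ F ∈ (Δ.lk x).faces, ¬ (Δ.del x).IsFacet F) →
      VertexDecomposable Δ

/-- Shellability (non-pure, Björner–Wachs). -/
def SComplex.Shellable (Δ : SComplex n) : Prop :=
  ∃ L : List (Finset (Fin n)), L.Nodup ∧ {F | F ∈ L} = {F | Δ.IsFacet F} ∧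
    ∀ (i j : ℕ) (hi : i < L.length) (hj : j < L.length), i < j →
      ∃ x ∈ L.get ⟨j, hj⟩ \ L.get ⟨i, hi⟩,
        ∃ (l : ℕ) (hl : l < j),
          L.get ⟨j, hj⟩ \ L.get ⟨l, Nat.lt_trans hl hj⟩ = {x}

/-- The Alexander dual complex `Δ^∨ = { V \ A : A ∉ Δ }`. -/
noncomputable def SComplex.dual (Δ : SComplex n) : SComplex n where
  faces := Finset.univ.filter (fun B => Bᶜ ∉ Δ.faces)
  down := by
    classical
    intro F hF G hG
    simp only [Finset.mem_filter, Finset.mem_univ, true_and] at *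
    intro hGc
    exact hF (Δ.down _ hGc _ (Finset.compl_subset_compl.2 hG))


/-- The squarefree exponent vector of a set of vertices. -/
noncomputable def sqmon {n : ℕ} (F : Finset (Fin n)) : Fin n →₀ ℕ :=
  ∑ i ∈ F, Finsupp.single i 1

/-- The Stanley–Reisner ideal of `Δ`. -/
noncomputable def srIdeal (K : Type) [Field K] {n : ℕ} (Δ : SComplex n) :
    Ideal (MvPolynomial (Fin n) K) :=
  Ideal.span ((fun F => mon K (sqmon F)) '' {F | F ∉ Δ.faces})


section CM
variable (A : Type) [CommRing A]

/-- Krull dimension of a module: the dimension of `A / ann M`. -/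
noncomputable def moduleDim (M : Type) [AddCommGroup M] [Module A M] : WithBot ℕ∞ :=
  ringKrullDim (A ⧸ Submodule.annihilator (⊤ : Submodule A M))

/-- `rs` is an `M`-regular sequence: each entry is a nonzerodivisor on the quotient
of `M` by the previous entries. -/
def IsRegSeq (M : Type) [AddCommGroup M] [Module A M] (rs : List A) : Prop :=
  ∀ (i : ℕ) (hi : i < rs.length),
    ∀ m : M ⧸ (Ideal.span {r | r ∈ rs.take i} • (⊤ : Submodule A M)),
      rs.get ⟨i, hi⟩ • m = 0 → m = 0

/-- Depth of `M` with respect to the ideal `J`: the supremum of lengths of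
`M`-regular sequences contained in `J`. -/
noncomputable def moduleDepth (J : Ideal A) (M : Type) [AddCommGroup M] [Module A M] : ℕ :=
  sSup {k | ∃ rs : List A, rs.length = k ∧ (∀ r ∈ rs, r ∈ J) ∧ IsRegSeq A M rs}

/-- Cohen–Macaulay module (with respect to the ideal `J` playing the role of the
maximal ideal): zero, or depth equals Krull dimension. -/
def IsCMmod (J : Ideal A) (M : Type) [AddCommGroup M] [Module A M] : Prop :=
  Subsingleton M ∨ moduleDim A M = ((moduleDepth A J M : ℕ∞) : WithBot ℕ∞)

/-- Sequentially Cohen–Macaulay module: a filtration `0 = M₀ ⊂ ... ⊂ M_r = N` with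
Cohen–Macaulay quotients of strictly increasing Krull dimension. -/
def IsSeqCM (J : Ideal A) (N : Type) [AddCommGroup N] [Module A N] : Prop :=
  ∃ (r : ℕ) (c : Fin (r + 1) → Submodule A N),
    c 0 = ⊥ ∧ c (Fin.last r) = ⊤ ∧
    (∀ i : Fin r, c i.castSucc ≤ c i.succ) ∧
    (∀ i : Fin r,
      IsCMmod A J (↥(c i.succ) ⧸ (Submodule.comap (c i.succ).subtype (c i.castSucc)))) ∧
    (∀ i j : Fin r, i < j →
      moduleDim A (↥(c i.succ) ⧸ (Submodule.comap (c i.succ).subtype (c i.castSucc)))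
        < moduleDim A (↥(c j.succ) ⧸ (Submodule.comap (c j.succ).subtype (c j.castSucc))))

end CM

variable {K : Type} [Field K] {n : ℕ}

/-- The irrelevant maximal ideal `(x_1, ..., x_n)`. -/
noncomputable def maxIdeal (K : Type) [Field K] (n : ℕ) : Ideal (MvPolynomial (Fin n) K) :=
  Ideal.span (Set.range (X : Fin n → MvPolynomial (Fin n) K))

section Res

/-- The differential of a free complex given by a matrix of polynomials. -/
noncomputable def resDiff (β : ℕ → ℕ)
    (Mt : (i : ℕ) → Fin (β (i + 1)) → Fin (β i) → MvPolynomial (Fin n) K) (i : ℕ) :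
    (Fin (β (i + 1)) →₀ MvPolynomial (Fin n) K) →ₗ[MvPolynomial (Fin n) K]
      (Fin (β i) →₀ MvPolynomial (Fin n) K) :=
  Finsupp.lsum (MvPolynomial (Fin n) K) fun j =>
    LinearMap.toSpanSingleton (MvPolynomial (Fin n) K) _
      (∑ k : Fin (β i), Finsupp.single k (Mt i j k))

/-- The augmentation map sending basis elements to the generators `g`. -/
noncomputable def resAug (β₀ : ℕ) (g : Fin β₀ → MvPolynomial (Fin n) K) :
    (Fin β₀ →₀ MvPolynomial (Fin n) K) →ₗ[MvPolynomial (Fin n) K] MvPolynomial (Fin n) K :=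
  Finsupp.lsum (MvPolynomial (Fin n) K) fun j =>
    LinearMap.toSpanSingleton (MvPolynomial (Fin n) K) _ (g j)

/-- A graded free resolution of the ideal `I`, recorded by Betti numbers `β`,
degree shifts `dg`, homogeneous generators `g` of `I`, and matrices `Mt` of
homogeneous entries, which is exact. -/
structure GradedRes (I : Ideal (MvPolynomial (Fin n) K)) where
  β : ℕ → ℕ
  dg : (i : ℕ) → Fin (β i) → ℕ
  g : Fin (β 0) → MvPolynomial (Fin n) K
  hg : ∀ j, (g j).IsHomogeneous (dg 0 j)
  Mt : (i : ℕ) → Fin (β (i + 1)) → Fin (β i) → MvPolynomial (Fin n) K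
  hMt : ∀ i j k, Mt i j k = 0 ∨
    (dg i k ≤ dg (i + 1) j ∧ (Mt i j k).IsHomogeneous (dg (i + 1) j - dg i k))
  hrange : LinearMap.range (resAug (β 0) g) = I
  hexact0 : LinearMap.ker (resAug (β 0) g) = LinearMap.range (resDiff β Mt 0)
  hexact : ∀ i, LinearMap.ker (resDiff β Mt i) = LinearMap.range (resDiff β Mt (i + 1))

/-- Castelnuovo–Mumford regularity, as the infimum over all graded free
resolutions of the maximum of `(shift) - (homological degree)`. -/
noncomputable def reg (I : Ideal (MvPolynomial (Fin n) K)) : ℕ∞ :=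
  sInf { r : ℕ∞ | ∃ Res : GradedRes I,
    ∀ (i : ℕ) (j : Fin (Res.β i)), (Res.dg i j : ℕ∞) ≤ r + i }

/-- `I` has a `d`-linear resolution. -/
def HasLinearRes (I : Ideal (MvPolynomial (Fin n) K)) (d : ℕ) : Prop :=
  ∃ Res : GradedRes I, ∀ (i : ℕ) (j : Fin (Res.β i)), Res.dg i j = d + i

/-- The ideal generated by the degree-`d` elements of `I`. -/
noncomputable def compIdeal (I : Ideal (MvPolynomial (Fin n) K)) (d : ℕ) : Ideal (MvPolynomial (Fin n) K) :=
  Ideal.span { f | f ∈ I ∧ f.IsHomogeneous d }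

/-- Componentwise linear ideal. -/
def ComponentwiseLinear (I : Ideal (MvPolynomial (Fin n) K)) : Prop :=
  ∀ d, compIdeal I d = ⊥ ∨ HasLinearRes (compIdeal I d) d

end Res

/-!
List the minimal generators of `x I₁ + I₂` as those of `x I₁`, in a linear-quotient order of
`I₁`, followed by those of `I₂`, in a linear-quotient order of `I₂`. Multiplying by `x` does not
change the colon ideals within `x I₁`. For a generator `u` of `I₂`, the colon by the earlier
generators of `I₂` is generated by variables by induction, and `(x I₁) : u = (x)`: indeed
`u ∈ I₂ ⊆ I₁` is divisible by a generator `c` of `I₁` while `x ∤ u`, so `(x c) : u = (x)`.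
-/

lemma mon_mul (a b : Fin n →₀ ℕ) : mon K a * mon K b = mon K (a + b) := by
  simp [mon, monomial_mul]

lemma X_eq_mon (i : Fin n) : (X i : R K n) = mon K (Finsupp.single i 1) := rfl

lemma mem_span_mon_iff {T : Set (Fin n →₀ ℕ)} {f : R K n} :
    f ∈ Ideal.span (mon K '' T) ↔ ∀ m ∈ f.support, ∃ a ∈ T, a ≤ m :=
  mem_ideal_span_monomial_image

lemma mon_mem_span_mon_iff {T : Set (Fin n →₀ ℕ)} {b : Fin n →₀ ℕ} :
    mon K b ∈ Ideal.span (mon K '' T) ↔ ∃ a ∈ T, a ≤ b := by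
  simp [mem_span_mon_iff, mon]

lemma mon_mem_of_le {I : Ideal (R K n)} {a b : Fin n →₀ ℕ} (ha : mon K a ∈ I) (hab : a ≤ b) :
    mon K b ∈ I := by
  rw [← tsub_add_cancel_of_le hab, ← mon_mul]
  exact I.mul_mem_left _ ha

lemma mem_minGens_iff {I : Ideal (R K n)} {a : Fin n →₀ ℕ} :
    a ∈ minGens I ↔ mon K a ∈ I ∧ ∀ b < a, mon K b ∉ I := by
  refine and_congr_right fun _ => ⟨fun h b hba hb => ?_, fun h b i hab => h b ?_⟩
  · obtain ⟨i, hi⟩ := (Finsupp.lt_def.1 hba).2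
    refine h (a - Finsupp.single i 1) i ?_ (mon_mem_of_le hb fun j => ?_)
    · rw [tsub_add_cancel_of_le (Finsupp.single_le_iff.2 (by omega))]
    · have hbj := hba.le j
      simp only [Finsupp.tsub_apply, Finsupp.single_apply]
      split_ifs with hij
      · subst hij
        omega
      · omega
  · rw [hab]
    exact lt_add_of_pos_right _ (pos_iff_ne_zero.2 (by simp))

lemma exists_minGens_le {I : Ideal (R K n)} {b : Fin n →₀ ℕ} (hb : mon K b ∈ I) :
    ∃ c ∈ minGens I, c ≤ b := by
  obtain ⟨c, ⟨hcb, hc⟩, hmin⟩ :=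
    wellFounded_lt.has_min {c | c ≤ b ∧ mon K c ∈ I} ⟨b, le_rfl, hb⟩
  exact ⟨c, mem_minGens_iff.2 ⟨hc, fun d hdc hd => hmin d ⟨hdc.le.trans hcb, hd⟩ hdc⟩, hcb⟩

lemma span_minGens {I : Ideal (R K n)} (hI : IsMonomialIdeal I) :
    I = Ideal.span (mon K '' minGens I) := by
  obtain ⟨S, rfl⟩ := hI
  refine le_antisymm (Ideal.span_le.2 ?_) (Ideal.span_le.2 fun _ ⟨a, ha, h⟩ => h ▸ ha.1)
  rintro _ ⟨a, ha, rfl⟩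
  exact mon_mem_span_mon_iff.2 (exists_minGens_le (Ideal.subset_span ⟨a, ha, rfl⟩))

lemma isAntichain_minGens (I : Ideal (R K n)) : IsAntichain (· ≤ ·) (minGens I) :=
  fun _ ha _ hb hne hab => (mem_minGens_iff.1 hb).2 _ (lt_of_le_of_ne hab hne) ha.1

lemma minGens_span_mon {T : Set (Fin n →₀ ℕ)} (hT : IsAntichain (· ≤ ·) T) :
    minGens (Ideal.span (mon K '' T)) = T := by
  ext a
  rw [mem_minGens_iff, mon_mem_span_mon_iff]
  constructor
  · rintro ⟨⟨t, ht, hta⟩, hmin⟩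
    obtain rfl | hlt := eq_or_lt_of_le hta
    · exact ht
    · exact absurd (mon_mem_span_mon_iff.2 ⟨t, ht, le_rfl⟩) (hmin t hlt)
  · refine fun ha => ⟨⟨a, ha, le_rfl⟩, fun b hba hb => ?_⟩
    obtain ⟨t, ht, htb⟩ := mon_mem_span_mon_iff.1 hb
    exact hT ht ha (htb.trans_lt hba).ne (htb.trans hba.le)

lemma minGens_span_singleton_mon (a : Fin n →₀ ℕ) :
    minGens (Ideal.span {mon K a}) = {a} := by
  simpa using minGens_span_mon (K := K) (Set.subsingleton_singleton.isAntichain (· ≤ ·))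

lemma minGens_bot : minGens (⊥ : Ideal (R K n)) = ∅ := by
  simpa using minGens_span_mon (K := K) (n := n) IsAntichain.empty

lemma span_singleton_mon_zero : Ideal.span {mon K (0 : Fin n →₀ ℕ)} = ⊤ := by
  simp [mon]

lemma span_X_mul_span_mon (x : Fin n) (T : Set (Fin n →₀ ℕ)) :
    Ideal.span {(X x : R K n)} * Ideal.span (mon K '' T)
      = Ideal.span (mon K '' ((· + Finsupp.single x 1) '' T)) := by
  rw [Ideal.span_mul_span', Set.singleton_mul, Set.image_image, Set.image_image]
  simp_rw [X_eq_mon, mon_mul, add_comm]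

lemma IsMonomialIdeal.span_X_mul {I : Ideal (R K n)} (hI : IsMonomialIdeal I) (x : Fin n) :
    IsMonomialIdeal (Ideal.span {(X x : R K n)} * I) := by
  obtain ⟨S, rfl⟩ := hI
  exact ⟨_, span_X_mul_span_mon x S⟩

lemma IsMonomialIdeal.sup {I J : Ideal (R K n)} (hI : IsMonomialIdeal I)
    (hJ : IsMonomialIdeal J) : IsMonomialIdeal (I + J) := by
  obtain ⟨S, rfl⟩ := hI
  obtain ⟨T, rfl⟩ := hJ
  exact ⟨S ∪ T, by rw [Set.image_union, Ideal.span_union, Submodule.add_eq_sup]⟩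

lemma minGens_span_X_mul {I : Ideal (R K n)} (hI : IsMonomialIdeal I) (x : Fin n) :
    minGens (Ideal.span {(X x : R K n)} * I) = (· + Finsupp.single x 1) '' minGens I := by
  conv_lhs => rw [span_minGens hI, span_X_mul_span_mon]
  exact minGens_span_mon ((isAntichain_minGens I).image _ fun _ _ => le_of_add_le_add_right)

lemma support_mul_mon (f : R K n) (u : Fin n →₀ ℕ) :
    (f * mon K u).support = f.support.map (addRightEmbedding u) :=
  AddMonoidAlgebra.support_coeff_mul_single f _ (by simp) _

lemma colon_span_mon (T : Set (Fin n →₀ ℕ)) (u : Fin n →₀ ℕ) :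
    (Ideal.span (mon K '' T)).colon (Ideal.span {mon K u})
      = Ideal.span (mon K '' ((· - u) '' T)) := by
  ext f
  rw [Ideal.mem_colon_span_singleton, mem_span_mon_iff, mem_span_mon_iff, support_mul_mon]
  simp only [Finset.mem_map, addRightEmbedding_apply, forall_exists_index, and_imp,
    forall_apply_eq_imp_iff₂, Set.exists_mem_image, tsub_le_iff_right]

def IsVariableGenerated (D : Set (Fin n →₀ ℕ)) : Prop :=
  ∀ d ∈ D, ∃ i, Finsupp.single i 1 ∈ D ∧ Finsupp.single i 1 ≤ d

lemma IsVariableGenerated.union {A B : Set (Fin n →₀ ℕ)} (hA : IsVariableGenerated A)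
    (hB : IsVariableGenerated B) : IsVariableGenerated (A ∪ B) := by
  rintro d (hd | hd)
  · obtain ⟨i, hi, hid⟩ := hA d hd
    exact ⟨i, Or.inl hi, hid⟩
  · obtain ⟨i, hi, hid⟩ := hB d hd
    exact ⟨i, Or.inr hi, hid⟩

lemma IsVariableGenerated.span_mon_eq_span_X {D : Set (Fin n →₀ ℕ)}
    (hD : IsVariableGenerated D) :
    Ideal.span (mon K '' D)
      = Ideal.span ((fun i => (X i : R K n)) '' {i | Finsupp.single i 1 ∈ D}) := by
  have hX : (fun i => (X i : R K n)) '' {i | Finsupp.single i 1 ∈ D}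
      = mon K '' ((Finsupp.single · 1) '' {i | Finsupp.single i 1 ∈ D}) := by
    rw [Set.image_image]
    rfl
  rw [hX]
  refine le_antisymm (Ideal.span_le.2 ?_) (Ideal.span_mono (Set.image_mono ?_))
  · rintro _ ⟨d, hd, rfl⟩
    obtain ⟨i, hi, hid⟩ := hD d hd
    exact mon_mem_span_mon_iff.2 ⟨_, ⟨i, hi, rfl⟩, hid⟩
  · rintro _ ⟨i, hi, rfl⟩
    exact hi

/-- By `colon_span_mon`, `(· - u) '' p` (truncated subtraction) is the set of exponents of the
generators of the colon ideal `(p) : u`. -/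
def IsLinearQuotientOrder (L : List (Fin n →₀ ℕ)) : Prop :=
  ∀ p u s, L = p ++ u :: s → IsVariableGenerated ((· - u) '' {a | a ∈ p})

lemma isLinearQuotientOrder_nil : IsLinearQuotientOrder ([] : List (Fin n →₀ ℕ)) := by
  intro p u s h
  simp at h

lemma isLinearQuotientOrder_singleton (a : Fin n →₀ ℕ) : IsLinearQuotientOrder [a] := by
  intro p u s h
  rcases List.cons_eq_append_iff.1 h with ⟨rfl, -⟩ | ⟨p', -, h'⟩
  · simp [IsVariableGenerated]
  · simp at h'

lemma IsLinearQuotientOrder.map_add {L : List (Fin n →₀ ℕ)} (hL : IsLinearQuotientOrder L)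
    (w : Fin n →₀ ℕ) : IsLinearQuotientOrder (L.map (· + w)) := by
  intro p u s h
  obtain ⟨p₁, l, rfl, rfl, hl⟩ := List.map_eq_append_iff.1 h
  obtain ⟨u₁, s₁, rfl, rfl, -⟩ := List.map_eq_cons_iff.1 hl
  have hsub : (· - (u₁ + w)) '' {a | a ∈ p₁.map (· + w)} = (· - u₁) '' {a | a ∈ p₁} := by
    ext
    simp [add_tsub_add_eq_tsub_right]
  rw [hsub]
  exact hL p₁ u₁ s₁ rfl

lemma IsLinearQuotientOrder.append {L₁ L₂ : List (Fin n →₀ ℕ)} (h₁ : IsLinearQuotientOrder L₁)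
    (h₂ : IsLinearQuotientOrder L₂)
    (h : ∀ u ∈ L₂, IsVariableGenerated ((· - u) '' {a | a ∈ L₁})) :
    IsLinearQuotientOrder (L₁ ++ L₂) := by
  intro p u s hL
  rcases List.append_eq_append_iff.1 hL with ⟨q, rfl, hq⟩ | ⟨q, rfl, hq⟩
  · have hset : {a | a ∈ L₁ ++ q} = {a | a ∈ L₁} ∪ {a | a ∈ q} := by
      ext
      simp
    rw [hset, Set.image_union]
    exact (h u (by simp [hq])).union (h₂ q u s hq)
  · rcases List.cons_eq_append_iff.1 hq with ⟨rfl, rfl⟩ | ⟨q', rfl, rfl⟩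
    · simpa using h u (by simp)
    · exact h₁ p u q' rfl

lemma isVariableGenerated_sub_image_add_single {T : Set (Fin n →₀ ℕ)} {x : Fin n}
    {c u : Fin n →₀ ℕ} (hc : c ∈ T) (hcu : c ≤ u) (hux : u x = 0) :
    IsVariableGenerated ((· - u) '' ((· + Finsupp.single x 1) '' T)) := by
  rintro _ ⟨_, ⟨t, -, rfl⟩, rfl⟩
  refine ⟨x, ⟨_, ⟨c, hc, rfl⟩, ?_⟩, by simp [hux]⟩
  ext k
  have hck := hcu k
  rcases eq_or_ne x k with rfl | hk
  · simp only [Finsupp.tsub_apply, Finsupp.add_apply, Finsupp.single_eq_same]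
    omega
  · simp only [Finsupp.tsub_apply, Finsupp.add_apply, Finsupp.single_eq_of_ne' hk]
    omega

def HasLinearQuotientOrder (I : Ideal (R K n)) : Prop :=
  IsMonomialIdeal I ∧ ∃ L : List (Fin n →₀ ℕ),
    L.Nodup ∧ {a | a ∈ L} = minGens I ∧ IsLinearQuotientOrder L

lemma hasLinearQuotientOrder_span_singleton (a : Fin n →₀ ℕ) :
    HasLinearQuotientOrder (Ideal.span {mon K a}) :=
  ⟨⟨{a}, by rw [Set.image_singleton]⟩, [a], List.nodup_singleton a,
    by simp [minGens_span_singleton_mon], isLinearQuotientOrder_singleton a⟩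

theorem VertexSplittable.hasLinearQuotientOrder {I : Ideal (R K n)} (h : VertexSplittable I) :
    HasLinearQuotientOrder I := by
  induction h with
  | principal a => exact hasLinearQuotientOrder_span_singleton a
  | bot => exact ⟨⟨∅, by simp⟩, [], List.nodup_nil, by simp [minGens_bot],
      isLinearQuotientOrder_nil⟩
  | top => exact span_singleton_mon_zero (K := K) ▸ hasLinearQuotientOrder_span_singleton 0
  | split x I₁ I₂ _ _ _ hx₂ hle hunion hdisj ih₁ ih₂ =>
    obtain ⟨hI₁, L₁, hnd₁, hL₁, hq₁⟩ := ih₁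
    obtain ⟨hI₂, L₂, hnd₂, hL₂, hq₂⟩ := ih₂
    have hshift : {a | a ∈ L₁.map (· + Finsupp.single x 1)}
        = (· + Finsupp.single x 1) '' minGens I₁ := by
      rw [← hL₁]
      ext
      simp
    refine ⟨(hI₁.span_X_mul x).sup hI₂, L₁.map (· + Finsupp.single x 1) ++ L₂, ?_, ?_, ?_⟩
    · refine (hnd₁.map (add_left_injective _)).append hnd₂ fun a ha₁ ha₂ => ?_
      refine hdisj.subset ⟨?_, hL₂.subset ha₂⟩
      rw [minGens_span_X_mul hI₁, ← hshift]
      exact ha₁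
    · rw [hunion, minGens_span_X_mul hI₁, ← hshift, ← hL₂]
      ext
      simp
    · refine (hq₁.map_add _).append hq₂ fun u hu => ?_
      have hu₂ : u ∈ minGens I₂ := hL₂.subset hu
      obtain ⟨c, hc, hcu⟩ := exists_minGens_le (hle hu₂.1)
      rw [hshift]
      exact isVariableGenerated_sub_image_add_single hc hcu (hx₂ u hu₂)

lemma HasLinearQuotientOrder.hasLinearQuotients {I : Ideal (R K n)}
    (h : HasLinearQuotientOrder I) : HasLinearQuotients I := by
  obtain ⟨hI, L, hnd, hL, hq⟩ := h
  refine ⟨hI, L, hnd, hL, fun j hj _ =>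
    ⟨_, (colon_span_mon _ _).trans (hq _ _ (L.drop (j + 1)) ?_).span_mon_eq_span_X⟩⟩
  rw [List.get_eq_getElem, ← List.drop_eq_getElem_cons hj, List.take_append_drop]

/-- Every vertex splittable monomial ideal has linear quotients. -/
theorem stmt1 {K : Type} [Field K] {n : ℕ} (I : Ideal (R K n))
    (h : VertexSplittable I) : HasLinearQuotients I :=
  h.hasLinearQuotientOrder.hasLinearQuotients

end Paper
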